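/- Let δ > 0, β₀ > 0, β₁ < 0, τ_c > 0, ω_c > 0 with Δ(iω_c, τ_c) = 0 and Δ_λ(iω_c, τ_c) ≠ 0. Define c₂ = 2β₀β₁/τ_c, q(s) = e^{iω_c s} for s ∈ [−τ_c, 0], q*(s) = d·e^{iω_c s} for s ∈ [0, τ_c] with conj(d) = Δ_λ(iω_c, τ_c)^{−1}, and the bilinear form ⟨ψ, φ⟩ = conj(ψ(0))·φ(0) − c₂·∫_{−τ_c}^{0} ( ∫_{0}^{s} conj(ψ(ξ − s))·φ(ξ) dξ ) ds for continuous ψ : [0, τ_c] → ℂ and φ : [−τ_c, 0] → ℂ. Then ⟨q*, q⟩ = 1 and ⟨q*, conj(q)⟩ = 0. -/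

import Mathlib

/-- The characteristic function
`Δ(λ,τ) = λ + δ + β₀β₁ − (2β₀β₁/τ)∫_{−τ}^{0} e^{λ s} ds`, for `λ ∈ ℂ`. -/
noncomputable def charFn (δ β₀ β₁ τ : ℝ) (lam : ℂ) : ℂ :=
  lam + (δ : ℂ) + (β₀ : ℂ) * (β₁ : ℂ) -
    ((2 * β₀ * β₁ / τ : ℝ) : ℂ) * ∫ s in (-τ)..(0 : ℝ), Complex.exp (lam * (s : ℂ))

/-- `Δ_λ(λ,τ) = 1 − (2β₀β₁/τ)∫_{−τ}^{0} s e^{λ s} ds`, the partial derivative in `λ`. -/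
noncomputable def charFnD (β₀ β₁ τ : ℝ) (lam : ℂ) : ℂ :=
  1 - ((2 * β₀ * β₁ / τ : ℝ) : ℂ) * ∫ s in (-τ)..(0 : ℝ), (s : ℂ) * Complex.exp (lam * (s : ℂ))

/-- The Hale bilinear pairing
`⟨ψ, φ⟩ = conj(ψ(0)) φ(0) − c₂ ∫_{−τ_c}^{0} (∫_{0}^{s} conj(ψ(ξ − s)) φ(ξ) dξ) ds`. -/
noncomputable def pairing (c₂ τ_c : ℝ) (ψ φ : ℝ → ℂ) : ℂ :=
  (starRingEnd ℂ) (ψ 0) * φ 0 -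
    (c₂ : ℂ) * ∫ s in (-τ_c)..(0 : ℝ), ∫ ξ in (0 : ℝ)..s, (starRingEnd ℂ) (ψ (ξ - s)) * φ ξ
/-!
Both pairings are pairings of exponentials `d e^{μ s}` and `e^{ν s}`, whose inner integrand is
`conj d · e^{-conj μ · s} · e^{(conj μ + ν) ξ}`. For `⟨q*, q⟩` (`ν = iω_c = -conj μ`) it does not
depend on `ξ`, and the pairing is `conj d · Δ_λ(iω_c, τ_c) = 1`. For `⟨q*, conj q⟩`
(`ν = -iω_c`) the inner integral is elementary and the pairing becomes
`conj d (1 - c₂ (∫ e^{-iω_c s} - ∫ e^{iω_c s}) / (-2iω_c))`. Since `Δ` has real coefficients,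
`-iω_c` is a root of `Δ` as well, and subtracting `Δ(-iω_c) = 0` from `Δ(iω_c) = 0` shows that
`c₂ (∫ e^{-iω_c s} - ∫ e^{iω_c s}) = -2iω_c`.
-/

open Complex ComplexConjugate

lemma conj_exp_ofReal_mul (z : ℂ) (s : ℝ) : conj (cexp (z * s)) = cexp (conj z * s) := by
  rw [← exp_conj, map_mul, conj_ofReal]

lemma charFn_conj (δ β₀ β₁ τ : ℝ) (lam : ℂ) :
    charFn δ β₀ β₁ τ (conj lam) = conj (charFn δ β₀ β₁ τ lam) := by
  simp only [charFn, map_sub, map_add, map_mul, conj_ofReal, conj_exp_ofReal_mul,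
    ← intervalIntegral.intervalIntegral_conj]

section Exponentials

variable {c τ : ℝ} {d μ ν : ℂ}

lemma pairing_smul_exp_exp :
    pairing c τ (fun s => d * cexp (μ * s)) (fun s => cexp (ν * s)) =
      conj d * (1 - c * ∫ s in -τ..0,
        cexp (-conj μ * s) * ∫ ξ in (0 : ℝ)..s, cexp ((conj μ + ν) * ξ)) := by
  have integrand (s ξ : ℝ) : conj (d * cexp (μ * ↑(ξ - s))) * cexp (ν * ξ) =
      conj d * (cexp (-conj μ * s) * cexp ((conj μ + ν) * ξ)) := by
    rw [map_mul, conj_exp_ofReal_mul, mul_assoc, ← exp_add, ← exp_add]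
    congr 2
    push_cast
    ring
  simp only [pairing, integrand, intervalIntegral.integral_const_mul, ofReal_zero, mul_zero,
    exp_zero, mul_one]
  ring

lemma pairing_smul_exp_exp_of_add_eq_zero (h : conj μ + ν = 0) :
    pairing c τ (fun s => d * cexp (μ * s)) (fun s => cexp (ν * s)) =
      conj d * (1 - c * ∫ s in -τ..0, s * cexp (ν * s)) := by
  have hμ : -conj μ = ν := by linear_combination -h
  simp [pairing_smul_exp_exp, h, hμ, mul_comm]

lemma pairing_smul_exp_exp_of_add_ne_zero (h : conj μ + ν ≠ 0) :
    pairing c τ (fun s => d * cexp (μ * s)) (fun s => cexp (ν * s)) =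
      conj d * (1 - c * ((∫ s in -τ..0, cexp (ν * s)) - ∫ s in -τ..0, cexp (-conj μ * s)) /
        (conj μ + ν)) := by
  have inner (s : ℝ) : cexp (-conj μ * s) * ∫ ξ in (0 : ℝ)..s, cexp ((conj μ + ν) * ξ) =
      (cexp (ν * s) - cexp (-conj μ * s)) / (conj μ + ν) := by
    rw [integral_exp_mul_complex h, ofReal_zero, mul_zero, exp_zero, mul_div_assoc', mul_sub,
      ← exp_add]
    ring_nf
  have hint (z : ℂ) :
      IntervalIntegrable (fun s : ℝ => cexp (z * s)) MeasureTheory.volume (-τ) 0 :=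
    (by fun_prop : Continuous fun s : ℝ => cexp (z * s)).intervalIntegrable _ _
  rw [pairing_smul_exp_exp]
  simp only [inner, intervalIntegral.integral_div,
    intervalIntegral.integral_sub (hint ν) (hint (-conj μ))]
  ring

end Exponentials

theorem norming_conditions_general
    (δ β₀ β₁ τ_c ω_c : ℝ) (hω_c : 0 < ω_c)
    (hzero : charFn δ β₀ β₁ τ_c (Complex.I * (ω_c : ℂ)) = 0)
    (hsimple : charFnD β₀ β₁ τ_c (Complex.I * (ω_c : ℂ)) ≠ 0)
    (d : ℂ) (hd : (starRingEnd ℂ) d = (charFnD β₀ β₁ τ_c (Complex.I * (ω_c : ℂ)))⁻¹)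
    (q qstar : ℝ → ℂ)
    (hq : ∀ s : ℝ, q s = Complex.exp (Complex.I * (ω_c : ℂ) * (s : ℂ)))
    (hqstar : ∀ s : ℝ, qstar s = d * Complex.exp (Complex.I * (ω_c : ℂ) * (s : ℂ))) :
    pairing (2 * β₀ * β₁ / τ_c) τ_c qstar q = 1 ∧
    pairing (2 * β₀ * β₁ / τ_c) τ_c qstar (fun s => (starRingEnd ℂ) (q s)) = 0 := by
  set iω := I * (ω_c : ℂ)
  have conj_iω : conj iω = -iω := by simp [iω]
  have hiω : iω ≠ 0 := mul_ne_zero I_ne_zero (ofReal_ne_zero.mpr hω_c.ne')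
  have hzero_conj : charFn δ β₀ β₁ τ_c (-iω) = 0 := by
    rw [← conj_iω, charFn_conj, hzero, map_zero]
  have hq_conj : (fun s => conj (q s)) = fun s : ℝ => cexp (-iω * s) := by
    simp only [hq, conj_exp_ofReal_mul, conj_iω]
  rw [funext hqstar, hq_conj, funext hq]
  constructor
  · rw [pairing_smul_exp_exp_of_add_eq_zero (by rw [conj_iω, neg_add_cancel]), ← charFnD, hd,
      inv_mul_cancel₀ hsimple]
  · have h2iω : -iω + -iω ≠ 0 := by
      rw [← neg_add, neg_ne_zero, ← two_mul]; exact mul_ne_zero two_ne_zero hiω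
    have hdiff : ((2 * β₀ * β₁ / τ_c : ℝ) : ℂ) *
        ((∫ s in -τ_c..0, cexp (-iω * s)) - ∫ s in -τ_c..0, cexp (iω * s)) =
          -iω + -iω := by
      unfold charFn at hzero hzero_conj
      linear_combination hzero - hzero_conj
    rw [pairing_smul_exp_exp_of_add_ne_zero (by rwa [conj_iω]), conj_iω, neg_neg, hdiff,
      div_self h2iω, sub_self, mul_zero]

/-- with `q(s) = e^{iω_c s}`, `q*(s) = d e^{iω_c s}` and
`conj d = Δ_λ(iω_c, τ_c)⁻¹`, the Hale pairing satisfies `⟨q*, q⟩ = 1` and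
`⟨q*, conj q⟩ = 0`. -/
theorem norming_conditions
    (δ β₀ β₁ τ_c ω_c : ℝ) (hδ : 0 < δ) (hβ₀ : 0 < β₀) (hβ₁ : β₁ < 0)
    (hτ_c : 0 < τ_c) (hω_c : 0 < ω_c)
    (hzero : charFn δ β₀ β₁ τ_c (Complex.I * (ω_c : ℂ)) = 0)
    (hsimple : charFnD β₀ β₁ τ_c (Complex.I * (ω_c : ℂ)) ≠ 0)
    (d : ℂ) (hd : (starRingEnd ℂ) d = (charFnD β₀ β₁ τ_c (Complex.I * (ω_c : ℂ)))⁻¹)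
    (q qstar : ℝ → ℂ)
    (hq : ∀ s : ℝ, q s = Complex.exp (Complex.I * (ω_c : ℂ) * (s : ℂ)))
    (hqstar : ∀ s : ℝ, qstar s = d * Complex.exp (Complex.I * (ω_c : ℂ) * (s : ℂ))) :
    pairing (2 * β₀ * β₁ / τ_c) τ_c qstar q = 1 ∧
    pairing (2 * β₀ * β₁ / τ_c) τ_c qstar (fun s => (starRingEnd ℂ) (q s)) = 0 :=
  norming_conditions_general δ β₀ β₁ τ_c ω_c hω_c hzero hsimple d hd q qstar hq hqstar
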